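/- arXiv:1908.08465 — 2 statements merged into one kernel-verified Lean document; each statement's English description precedes it below -/
import Mathlib

section
/- Let V : ℝ^d → ℝ^d be monotone and L-Lipschitz, and X ⊆ ℝ^d nonempty closed convex with a solution of the variational inequality. Run the Past Extra-Gradient method (x_{t+1/2} = proj_X(x_t - γ V(x_{t-1/2})), x_{t+1} = proj_X(x_t - γ V(x_{t+1/2}))) with constant step γ < 1/(2L), initialized at x_{1/2}, x₁ ∈ X. Then for every R > 0, the ergodic average x̄_t = t⁻¹ Σ_{j=1}^t x_{j+1/2} satisfies Err_R(x̄_t) ≤ (R² + ‖x₁ - x_{1/2}‖²)/(2γt), where Err_R(x̂) = max_{x ∈ X, ‖x - x₁‖ ≤ R} ⟨V(x), x̂ - x⟩. -/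
set_option maxHeartbeats 1000000

open scoped RealInnerProductSpace

/-- `p` is the Euclidean (metric) projection of `z` onto `C`. -/
def IsProjOn {d : ℕ} (C : Set (EuclideanSpace ℝ (Fin d)))
    (z p : EuclideanSpace ℝ (Fin d)) : Prop :=
  p ∈ C ∧ ∀ q ∈ C, ‖z - p‖ ≤ ‖z - q‖

section aux

lemma peg_quad_aux1 {c u v : ℝ} (hc : 0 < c) (hc2 : c < 1/2) :
    c^2*(u + c*v)^2 ≤ u^2/2 + c^2*v^2/2 := by
  have h14 : c^2 ≤ 1/4 := by nlinarith
  nlinarith [sq_nonneg (u/2 - 2*c^3*v),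
    mul_nonneg (by linarith : (0:ℝ) ≤ 1/4 - c^2) (sq_nonneg u),
    mul_nonneg (mul_nonneg (by linarith : (0:ℝ) ≤ 1/4 - c^2)
      (by positivity : (0:ℝ) ≤ 4*c^4+2*c^2)) (sq_nonneg v)]

lemma peg_quad_aux2 {c u v : ℝ} (hc : 0 < c) (hc2 : c < 1/2) :
    c^2*(u + v)^2 ≤ u^2/2 + v^2/2 := by
  have h14 : c^2 ≤ 1/4 := by nlinarith
  nlinarith [mul_nonneg (by linarith : (0:ℝ) ≤ 1/4 - c^2) (sq_nonneg (u+v)),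
    sq_nonneg (u-v)]

variable {d : ℕ}

local notation "E" => EuclideanSpace ℝ (Fin d)

lemma isProjOn_inner_le {C : Set E} (hcv : Convex ℝ C) {z p : E}
    (hp : IsProjOn C z p) : ∀ q ∈ C, ⟪z - p, q - p⟫ ≤ 0 := by
  intro q hq
  by_contra hlt
  push_neg at hlt
  have hqp : q ≠ p := by
    intro h
    rw [h] at hlt
    simp at hlt
  have hnq : 0 < ‖q - p‖ := by
    rw [norm_pos_iff]
    exact sub_ne_zero_of_ne hqp
  set I := ⟪z - p, q - p⟫ with hI
  set θ := min 1 (I / ‖q - p‖ ^ 2) with hθ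
  have hθpos : 0 < θ := lt_min one_pos (div_pos hlt (by positivity))
  have hθ1 : θ ≤ 1 := min_le_left _ _
  have hθI : θ * ‖q - p‖ ^ 2 ≤ I := by
    have h := min_le_right 1 (I / ‖q - p‖ ^ 2)
    rw [← le_div_iff₀ (by positivity : (0:ℝ) < ‖q - p‖ ^ 2)]
    exact h
  have hm : p + θ • (q - p) ∈ C := by
    have hmem := hcv hp.1 hq (by linarith : (0:ℝ) ≤ 1 - θ) hθpos.le (by ring)
    have : (1 - θ) • p + θ • q = p + θ • (q - p) := by
      rw [smul_sub, sub_smul, one_smul]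
      abel
    rwa [this] at hmem
  have hle := hp.2 _ hm
  have hsq : ‖z - (p + θ • (q - p))‖ ^ 2
      = ‖z - p‖ ^ 2 - 2 * θ * I + θ ^ 2 * ‖q - p‖ ^ 2 := by
    have hv : z - (p + θ • (q - p)) = (z - p) - θ • (q - p) := by abel
    rw [hv, norm_sub_sq_real, real_inner_smul_right, norm_smul,
      Real.norm_of_nonneg hθpos.le, mul_pow]
    ring
  have hle2 : ‖z - p‖ ^ 2 ≤ ‖z - (p + θ • (q - p))‖ ^ 2 := by
    have := norm_nonneg (z - p)
    nlinarith
  nlinarith [mul_pos hθpos hlt, mul_le_mul_of_nonneg_left hθI hθpos.le]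

lemma two_inner_polar (a b c : E) :
    2 * ⟪a - b, c - b⟫ = ‖a - b‖ ^ 2 + ‖c - b‖ ^ 2 - ‖a - c‖ ^ 2 := by
  have h : a - c = (a - b) - (c - b) := by abel
  have key := norm_sub_sq_real (a - b) (c - b)
  rw [h]
  linarith [key]

lemma inner_flip (a u v : E) : ⟪a, u - v⟫ = -⟪a, v - u⟫ := by
  rw [show u - v = -(v - u) from by abel, inner_neg_right]

lemma isProjOn_nonexp {C : Set E} (hcv : Convex ℝ C) {z1 z2 p1 p2 : E}
    (h1 : IsProjOn C z1 p1) (h2 : IsProjOn C z2 p2) : ‖p1 - p2‖ ≤ ‖z1 - z2‖ := by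
  have A := isProjOn_inner_le hcv h1 p2 h2.1
  have B := isProjOn_inner_le hcv h2 p1 h1.1
  have key : ‖p1 - p2‖ ^ 2 ≤ ⟪z1 - z2, p1 - p2⟫ := by
    have e1 : ⟪z1 - p1, p1 - p2⟫ - ⟪z2 - p2, p1 - p2⟫
        = ⟪z1 - z2, p1 - p2⟫ - ⟪p1 - p2, p1 - p2⟫ := by
      rw [← inner_sub_left, ← inner_sub_left]
      congr 1
      abel
    have e2 : ⟪z1 - p1, p1 - p2⟫ = -⟪z1 - p1, p2 - p1⟫ := inner_flip _ _ _
    have e3 : ⟪p1 - p2, p1 - p2⟫ = ‖p1 - p2‖ ^ 2 := real_inner_self_eq_norm_sq _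
    linarith
  have cs := real_inner_le_norm (z1 - z2) (p1 - p2)
  nlinarith [norm_nonneg (p1 - p2), norm_nonneg (z1 - z2)]

/-- Scalar combination for the per-step quasi-descent inequality. -/
lemma peg_step_core {γ L : ℝ} (hγ : 0 < γ) (hL : 0 < L)
    (xt xp w wm p Vw Vwm : E)
    (hA : ⟪xt - γ • Vw - xp, p - xp⟫ ≤ 0)
    (hB : ⟪xt - γ • Vwm - w, xp - w⟫ ≤ 0)
    (hlip : ‖Vw - Vwm‖ ≤ L * ‖w - wm‖) :
    2 * γ * ⟪Vw, w - p⟫ ≤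
      ‖xt - p‖ ^ 2 - ‖xp - p‖ ^ 2 - ‖xt - w‖ ^ 2 + γ ^ 2 * L ^ 2 * ‖w - wm‖ ^ 2 := by
  have eA : ⟪xt - γ • Vw - xp, p - xp⟫
      = ⟪xt - xp, p - xp⟫ - γ * ⟪Vw, p - xp⟫ := by
    rw [show xt - γ • Vw - xp = (xt - xp) - γ • Vw from by abel, inner_sub_left,
      real_inner_smul_left]
  have eB : ⟪xt - γ • Vwm - w, xp - w⟫
      = ⟪xt - w, xp - w⟫ - γ * ⟪Vwm, xp - w⟫ := by
    rw [show xt - γ • Vwm - w = (xt - w) - γ • Vwm from by abel, inner_sub_left,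
      real_inner_smul_left]
  have split1 : ⟪Vw, w - p⟫ = ⟪Vw, w - xp⟫ + ⟪Vw, xp - p⟫ := by
    rw [← inner_add_right]; congr 1; abel
  have split2 : ⟪Vw, w - xp⟫ = ⟪Vw - Vwm, w - xp⟫ + ⟪Vwm, w - xp⟫ := by
    rw [← inner_add_left]; congr 1; abel
  have splitγ : 2 * γ * ⟪Vw, w - p⟫
      = 2 * γ * ⟪Vw - Vwm, w - xp⟫ + 2 * γ * ⟪Vwm, w - xp⟫ + 2 * γ * ⟪Vw, xp - p⟫ := by
    rw [split1, split2]; ring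
  have young : 2 * γ * ⟪Vw - Vwm, w - xp⟫ ≤ γ ^ 2 * L ^ 2 * ‖w - wm‖ ^ 2 + ‖w - xp‖ ^ 2 := by
    have cs := real_inner_le_norm (Vw - Vwm) (w - xp)
    have h1 : ‖Vw - Vwm‖ * ‖w - xp‖ ≤ (L * ‖w - wm‖) * ‖w - xp‖ :=
      mul_le_mul_of_nonneg_right hlip (norm_nonneg _)
    nlinarith [sq_nonneg (γ * L * ‖w - wm‖ - ‖w - xp‖), norm_nonneg (w - xp),
      norm_nonneg (w - wm), mul_pos hγ hL]
  have pA := two_inner_polar xt xp p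
  have pB := two_inner_polar xt w xp
  have fA : 2 * γ * ⟪Vw, xp - p⟫ = -(2 * γ * ⟪Vw, p - xp⟫) := by
    rw [inner_flip Vw xp p]; ring
  have fB : 2 * γ * ⟪Vwm, w - xp⟫ = -(2 * γ * ⟪Vwm, xp - w⟫) := by
    rw [inner_flip Vwm w xp]; ring
  have n1 : ‖p - xp‖ ^ 2 = ‖xp - p‖ ^ 2 := by rw [norm_sub_rev]
  have n2 : ‖w - xp‖ ^ 2 = ‖xp - w‖ ^ 2 := by rw [norm_sub_rev]
  have hA' : 2 * ⟪xt - xp, p - xp⟫ ≤ 2 * (γ * ⟪Vw, p - xp⟫) := by linarith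
  have hB' : 2 * ⟪xt - w, xp - w⟫ ≤ 2 * (γ * ⟪Vwm, xp - w⟫) := by linarith
  linarith

end aux

/-- O(1/t) ergodic convergence rate of the Past Extra-Gradient method for monotone
Lipschitz variational inequalities.  `xh t` stands for the leading state `x_{t+1/2}`;
in particular `xh 0 = x_{1/2}` is the initialization. -/
theorem peg_ergodic_rate {d : ℕ}
    (V : EuclideanSpace ℝ (Fin d) → EuclideanSpace ℝ (Fin d))
    (hmono : ∀ x y : EuclideanSpace ℝ (Fin d), 0 ≤ ⟪V y - V x, y - x⟫)
    (L γ : ℝ) (hL : 0 < L)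
    (hlip : ∀ x y : EuclideanSpace ℝ (Fin d), ‖V x - V y‖ ≤ L * ‖x - y‖)
    (hγ : 0 < γ) (hγlt : γ < 1 / (2 * L))
    (X : Set (EuclideanSpace ℝ (Fin d)))
    (hne : X.Nonempty) (hcl : IsClosed X) (hcv : Convex ℝ X)
    (hsol : ∃ z ∈ X, ∀ p ∈ X, 0 ≤ ⟪V z, p - z⟫)
    (x xh : ℕ → EuclideanSpace ℝ (Fin d))
    (hxh0 : xh 0 ∈ X) (hx1 : x 1 ∈ X)
    (hup1 : ∀ t : ℕ, 1 ≤ t → IsProjOn X (x t - γ • V (xh (t - 1))) (xh t))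
    (hup2 : ∀ t : ℕ, 1 ≤ t → IsProjOn X (x t - γ • V (xh t)) (x (t + 1))) :
    ∀ t : ℕ, 1 ≤ t → ∀ R : ℝ, 0 < R → ∀ p ∈ X ∩ Metric.closedBall (x 1) R,
      ⟪V p, ((t : ℝ)⁻¹ • ∑ j ∈ Finset.Icc 1 t, xh j) - p⟫ ≤
        (R ^ 2 + ‖x 1 - xh 0‖ ^ 2) / (2 * γ * t) := by
  intro T hT R hR p hp
  obtain ⟨hpX, hpB⟩ := hp
  have hγL : γ * L < 1 / 2 := by
    have h2L : (0:ℝ) < 2 * L := by linarith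
    have := (lt_div_iff₀ h2L).mp hγlt
    nlinarith
  have hγLpos : 0 < γ * L := mul_pos hγ hL
  set c0 := ‖x 1 - xh 0‖ ^ 2 with hc0
  -- per-step quasi-descent, s = t - 1
  have step : ∀ s : ℕ, 2 * γ * ⟪V (xh (s+1)), xh (s+1) - p⟫ ≤
      ‖x (s+1) - p‖ ^ 2 - ‖x (s+2) - p‖ ^ 2 - ‖x (s+1) - xh (s+1)‖ ^ 2
        + γ ^ 2 * L ^ 2 * ‖xh (s+1) - xh s‖ ^ 2 := by
    intro s
    have h1 := hup1 (s+1) (Nat.le_add_left 1 s)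
    have h2 := hup2 (s+1) (Nat.le_add_left 1 s)
    have hsub : (s + 1) - 1 = s := Nat.succ_sub_one s
    rw [hsub] at h1
    have hA := isProjOn_inner_le hcv h2 p hpX
    have hB := isProjOn_inner_le hcv h1 (x (s+1+1)) h2.1
    exact peg_step_core hγ hL (x (s+1)) (x (s+2)) (xh (s+1)) (xh s) p
      (V (xh (s+1))) (V (xh s)) hA hB (hlip _ _)
  -- recursion for the Lipschitz residual
  have rec2 : ∀ s : ℕ, γ ^ 2 * L ^ 2 * ‖xh (s+2) - xh (s+1)‖ ^ 2 ≤
      (1/2) * ‖x (s+2) - xh (s+2)‖ ^ 2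
        + (1/2) * (γ ^ 2 * L ^ 2 * ‖xh (s+1) - xh s‖ ^ 2) := by
    intro s
    have h1 := hup1 (s+1) (Nat.le_add_left 1 s)
    have h2 := hup2 (s+1) (Nat.le_add_left 1 s)
    have hsub : (s + 1) - 1 = s := Nat.succ_sub_one s
    rw [hsub] at h1
    have hne1 : ‖x (s+2) - xh (s+1)‖ ≤ γ * L * ‖xh (s+1) - xh s‖ := by
      have h := isProjOn_nonexp hcv h2 h1
      have he : (x (s+1) - γ • V (xh (s+1))) - (x (s+1) - γ • V (xh s))
          = γ • (V (xh s) - V (xh (s+1))) := by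
        rw [smul_sub]; abel
      rw [he, norm_smul, Real.norm_of_nonneg hγ.le] at h
      calc ‖x (s+1+1) - xh (s+1)‖ ≤ γ * ‖V (xh s) - V (xh (s+1))‖ := h
        _ ≤ γ * (L * ‖xh s - xh (s+1)‖) :=
            mul_le_mul_of_nonneg_left (hlip _ _) hγ.le
        _ = γ * L * ‖xh (s+1) - xh s‖ := by rw [norm_sub_rev]; ring
    have tri : ‖xh (s+2) - xh (s+1)‖ ≤ ‖xh (s+2) - x (s+2)‖ + ‖x (s+2) - xh (s+1)‖ :=
      norm_sub_le_norm_sub_add_norm_sub _ _ _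
    set u := ‖x (s+2) - xh (s+2)‖ with hu
    set v := ‖xh (s+1) - xh s‖ with hv
    set a := ‖xh (s+2) - xh (s+1)‖ with ha
    have hu' : ‖xh (s+2) - x (s+2)‖ = u := norm_sub_rev _ _
    rw [hu'] at tri
    have hun : 0 ≤ u := norm_nonneg _
    have hvn : 0 ≤ v := norm_nonneg _
    have han : 0 ≤ a := norm_nonneg _
    have ha2 : a ^ 2 ≤ (u + γ * L * v) ^ 2 := by nlinarith
    have key := peg_quad_aux1 (u := u) (v := v) hγLpos hγL
    have hmonot : γ ^ 2 * L ^ 2 * a ^ 2 ≤ γ ^ 2 * L ^ 2 * (u + γ * L * v) ^ 2 := by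
      have : (0:ℝ) ≤ γ ^ 2 * L ^ 2 := by positivity
      exact mul_le_mul_of_nonneg_left ha2 this
    have hr : (γ * L) ^ 2 * (u + γ * L * v) ^ 2 ≤ u ^ 2 / 2 + (γ * L) ^ 2 * v ^ 2 / 2 := key
    nlinarith [hmonot, hr]
  have rec1 : γ ^ 2 * L ^ 2 * ‖xh 1 - xh 0‖ ^ 2 ≤
      (1/2) * ‖x 1 - xh 1‖ ^ 2 + (1/2) * c0 := by
    have tri : ‖xh 1 - xh 0‖ ≤ ‖xh 1 - x 1‖ + ‖x 1 - xh 0‖ :=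
      norm_sub_le_norm_sub_add_norm_sub _ _ _
    set u := ‖x 1 - xh 1‖ with hu
    set v := ‖x 1 - xh 0‖ with hv
    set a := ‖xh 1 - xh 0‖ with ha
    have hu' : ‖xh 1 - x 1‖ = u := norm_sub_rev _ _
    rw [hu'] at tri
    have hun : 0 ≤ u := norm_nonneg _
    have hvn : 0 ≤ v := norm_nonneg _
    have han : 0 ≤ a := norm_nonneg _
    have ha2 : a ^ 2 ≤ (u + v) ^ 2 := by nlinarith
    have key := peg_quad_aux2 (u := u) (v := v) hγLpos hγL
    have hmonot : γ ^ 2 * L ^ 2 * a ^ 2 ≤ γ ^ 2 * L ^ 2 * (u + v) ^ 2 := by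
      have : (0:ℝ) ≤ γ ^ 2 * L ^ 2 := by positivity
      exact mul_le_mul_of_nonneg_left ha2 this
    have hc0v : c0 = v ^ 2 := by rw [hc0, hv]
    nlinarith [hmonot, key]
  -- telescoped bound by induction
  have main : ∀ s : ℕ,
      ∑ j ∈ Finset.Icc 1 (s+1), 2 * γ * ⟪V (xh j), xh j - p⟫ ≤
        ‖x 1 - p‖ ^ 2 - ‖x (s+2) - p‖ ^ 2 + c0
          - γ ^ 2 * L ^ 2 * ‖xh (s+1) - xh s‖ ^ 2 := by
    intro s
    induction s with
    | zero =>
        rw [Finset.Icc_self, Finset.sum_singleton]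
        have h1 := step 0
        norm_num at h1 ⊢
        linarith [rec1]
    | succ n ih =>
        rw [Finset.sum_Icc_succ_top (by omega : 1 ≤ n + 1 + 1)]
        have h1 := step (n+1)
        have h2 := rec2 n
        have e1 : n + 1 + 1 = n + 2 := rfl
        have e2 : n + 1 + 2 = n + 3 := rfl
        rw [e1] at h1 ⊢
        rw [e2] at h1
        linarith
  -- combine with monotonicity
  obtain ⟨s, rfl⟩ : ∃ s, T = s + 1 := ⟨T - 1, (Nat.succ_pred_eq_of_pos hT).symm⟩
  have hx1p : ‖x 1 - p‖ ≤ R := by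
    have := Metric.mem_closedBall.mp hpB
    rw [dist_comm] at this
    simpa [dist_eq_norm] using this
  have hsum : ∑ j ∈ Finset.Icc 1 (s+1), 2 * γ * ⟪V (xh j), xh j - p⟫ ≤ R ^ 2 + c0 := by
    have h1 := main s
    have h2 : ‖x 1 - p‖ ^ 2 ≤ R ^ 2 := by nlinarith [norm_nonneg (x 1 - p)]
    have h3 : (0:ℝ) ≤ ‖x (s+2) - p‖ ^ 2 := sq_nonneg _
    have h4 : (0:ℝ) ≤ γ ^ 2 * L ^ 2 * ‖xh (s+1) - xh s‖ ^ 2 := by positivity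
    linarith
  have hmono' : ∀ j : ℕ, ⟪V p, xh j - p⟫ ≤ ⟪V (xh j), xh j - p⟫ := by
    intro j
    have h := hmono p (xh j)
    rw [inner_sub_left] at h
    linarith
  have hsum2 : ∑ j ∈ Finset.Icc 1 (s+1), ⟪V p, xh j - p⟫ ≤ (R ^ 2 + c0) / (2 * γ) := by
    have h1 : ∑ j ∈ Finset.Icc 1 (s+1), 2 * γ * ⟪V p, xh j - p⟫ ≤ R ^ 2 + c0 := by
      refine le_trans (Finset.sum_le_sum fun j _ => ?_) hsum
      have := hmono' j
      nlinarith
    rw [← Finset.mul_sum] at h1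
    rw [le_div_iff₀ (by linarith : (0:ℝ) < 2 * γ)]
    linarith
  -- final averaging
  have hcard : (Finset.Icc 1 (s+1)).card = s + 1 := by
    rw [Nat.card_Icc]
    omega
  have hTpos : (0:ℝ) < ((s+1 : ℕ) : ℝ) := by positivity
  have hcne : (((s+1 : ℕ) : ℝ)) ≠ 0 := ne_of_gt hTpos
  have hS : ∑ j ∈ Finset.Icc 1 (s+1), ⟪V p, xh j - p⟫
      = ⟪V p, ∑ j ∈ Finset.Icc 1 (s+1), xh j⟫ - ((s+1 : ℕ) : ℝ) * ⟪V p, p⟫ := by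
    simp only [inner_sub_right]
    rw [Finset.sum_sub_distrib, inner_sum, Finset.sum_const, hcard, nsmul_eq_mul]
  have hexp : ⟪V p, (((s+1 : ℕ) : ℝ))⁻¹ • (∑ j ∈ Finset.Icc 1 (s+1), xh j) - p⟫
      = (((s+1 : ℕ) : ℝ))⁻¹ * ∑ j ∈ Finset.Icc 1 (s+1), ⟪V p, xh j - p⟫ := by
    rw [inner_sub_right, real_inner_smul_right, hS]
    field_simp
  rw [hexp]
  have hfin : (((s+1 : ℕ) : ℝ))⁻¹ * ∑ j ∈ Finset.Icc 1 (s+1), ⟪V p, xh j - p⟫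
      ≤ (((s+1 : ℕ) : ℝ))⁻¹ * ((R ^ 2 + c0) / (2 * γ)) :=
    mul_le_mul_of_nonneg_left hsum2 (by positivity)
  refine hfin.trans (le_of_eq ?_)
  rw [inv_mul_eq_div, div_div]
end

section
/- Let V : ℝ^d → ℝ^d be monotone and L-Lipschitz, X ⊆ ℝ^d nonempty closed convex. Consider the Reflected Gradient iteration: x_{t+1/2} = 2x_t - x_{t-1}, x_{t+1} = proj_X(x_t - γ V(x_{t+1/2})), with constant step γ ≤ 1/((1+√2)L). Then for every t ≥ 1 and every p ∈ X: ‖x_{t+1} - p‖² ≤ ‖x_t - p‖² - 2γ⟨V(x_{t+1/2}), x_{t+1/2} - p⟩ + γL‖x_t - x_{t-1/2}‖² - γL‖x_{t+1} - x_{t+1/2}‖². -/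
open scoped RealInnerProductSpace

lemma isProjOn_var {d : ℕ} {C : Set (EuclideanSpace ℝ (Fin d))} (hcv : Convex ℝ C)
    {z p : EuclideanSpace ℝ (Fin d)} (h : IsProjOn C z p) :
    ∀ q ∈ C, ⟪z - p, q - p⟫ ≤ 0 := by
  obtain ⟨hp, hmin⟩ := h
  rw [← norm_eq_iInf_iff_real_inner_le_zero hcv hp]
  haveI : Nonempty C := ⟨⟨p, hp⟩⟩
  have h1 : ‖z - p‖ ≤ ⨅ w : C, ‖z - (w : EuclideanSpace ℝ (Fin d))‖ :=
    le_ciInf (fun w => hmin w.1 w.2)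
  have h2 : (⨅ w : C, ‖z - (w : EuclideanSpace ℝ (Fin d))‖) ≤ ‖z - p‖ :=
    ciInf_le ⟨0, fun _ ⟨q, hq⟩ => hq ▸ norm_nonneg _⟩ (⟨p, hp⟩ : C)
  exact le_antisymm h1 h2

set_option maxHeartbeats 1000000 in
/-- Quasi-descent inequality for the Reflected Gradient method.
`xh t` stands for the leading state `x_{t+1/2} = 2 x_t - x_{t-1}` (for `t ≥ 1`),
and `xh 0 = x_{1/2}` is the initialization. -/
theorem rg_descent {d : ℕ}
    (V : EuclideanSpace ℝ (Fin d) → EuclideanSpace ℝ (Fin d))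
    (hmono : ∀ x y : EuclideanSpace ℝ (Fin d), 0 ≤ ⟪V y - V x, y - x⟫)
    (L γ : ℝ) (hL : 0 < L)
    (hlip : ∀ x y : EuclideanSpace ℝ (Fin d), ‖V x - V y‖ ≤ L * ‖x - y‖)
    (hγ : 0 < γ) (hγle : γ ≤ 1 / ((1 + Real.sqrt 2) * L))
    (X : Set (EuclideanSpace ℝ (Fin d)))
    (hne : X.Nonempty) (hcl : IsClosed X) (hcv : Convex ℝ X)
    (x xh : ℕ → EuclideanSpace ℝ (Fin d))
    (hx0 : x 0 ∈ X)
    (hrefl : ∀ t : ℕ, 1 ≤ t → xh t = (2 : ℝ) • x t - x (t - 1))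
    (hup : ∀ t : ℕ, IsProjOn X (x t - γ • V (xh t)) (x (t + 1))) :
    ∀ t : ℕ, 1 ≤ t → ∀ p ∈ X,
      ‖x (t + 1) - p‖ ^ 2 ≤
        ‖x t - p‖ ^ 2 - 2 * γ * ⟪V (xh t), xh t - p⟫ +
          γ * L * ‖x t - xh (t - 1)‖ ^ 2 - γ * L * ‖x (t + 1) - xh t‖ ^ 2 := by
  intro t ht p hp
  -- names
  set q1 := x (t - 1) with hq1
  set q2 := x t with hq2
  set q3 := x (t + 1) with hq3
  set w := xh (t - 1) with hw
  set u := xh t with hu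
  have hu2 : u = (2 : ℝ) • q2 - q1 := hrefl t ht
  set vu := V u with hvu
  set vw := V w with hvw
  -- membership of iterates in X
  have hq3X : q3 ∈ X := (hup t).1
  have hq2X : q2 ∈ X := by
    obtain ⟨s, hs⟩ : ∃ s, t = s + 1 := ⟨t - 1, (Nat.succ_pred_eq_of_pos ht).symm⟩
    rw [hq2, hs]; exact (hup s).1
  have hq1X : q1 ∈ X := by
    by_cases h1 : t = 1
    · rw [hq1, h1]; simpa using hx0
    · obtain ⟨s, hs⟩ : ∃ s, t - 1 = s + 1 := ⟨t - 2, by omega⟩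
      rw [hq1, hs]; exact (hup s).1
  -- previous projection step: x t = proj (x (t-1) - γ V (xh (t-1)))
  have hprev : IsProjOn X (q1 - γ • vw) q2 := by
    have h := hup (t - 1)
    rwa [show t - 1 + 1 = t by omega] at h
  -- variational inequalities
  have hA : ⟪q2 - γ • vu - q3, p - q3⟫ ≤ 0 := isProjOn_var hcv (hup t) p hp
  have hB1 : ⟪q1 - γ • vw - q2, q3 - q2⟫ ≤ 0 := isProjOn_var hcv hprev q3 hq3X
  have hB2 : ⟪q1 - γ • vw - q2, q1 - q2⟫ ≤ 0 := isProjOn_var hcv hprev q1 hq1X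
  -- scalars
  set A := ‖q2 - q1‖ with hA'
  set C := ‖q2 - w‖ with hC'
  set E := ‖q3 - u‖ with hE'
  have hAnn : 0 ≤ A := norm_nonneg _
  have hCnn : 0 ≤ C := norm_nonneg _
  have hEnn : 0 ≤ E := norm_nonneg _
  have hk : γ * L ≤ Real.sqrt 2 - 1 := by
    have h2 : (0:ℝ) < (1 + Real.sqrt 2) * L := by positivity
    have h3 : γ * ((1 + Real.sqrt 2) * L) ≤ 1 := by
      have := mul_le_mul_of_nonneg_right hγle h2.le
      rwa [one_div, inv_mul_cancel₀ h2.ne'] at this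
    have hs2 : Real.sqrt 2 ^ 2 = 2 := Real.sq_sqrt (by norm_num)
    nlinarith [Real.sqrt_nonneg 2, hγ, hL]
  -- Cauchy-Schwarz + Lipschitz
  have hCS : ⟪vu - vw, u - q3⟫ ≤ L * (A + C) * E := by
    have h1 : ⟪vu - vw, u - q3⟫ ≤ ‖vu - vw‖ * ‖u - q3‖ := real_inner_le_norm _ _
    have h2 : ‖vu - vw‖ ≤ L * ‖u - w‖ := hlip u w
    have h3 : ‖u - w‖ ≤ A + C := by
      have : u - w = (q2 - q1) + (q2 - w) := by rw [hu2]; module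
      rw [this]; exact norm_add_le _ _
    have h4 : ‖u - q3‖ = E := by rw [hE', norm_sub_rev]
    have h5 : ‖vu - vw‖ ≤ L * (A + C) := h2.trans (mul_le_mul_of_nonneg_left h3 hL.le)
    have h6 : ‖vu - vw‖ * E ≤ L * (A + C) * E :=
      mul_le_mul_of_nonneg_right h5 hEnn
    rw [h4] at h1
    linarith
  -- expand variational inequalities into scalar form
  have F2 : ⟪q3 - q2, q3 - p⟫ + γ * ⟪vu, q3 - p⟫ ≤ 0 := by
    have e : (⟪q2 - γ • vu - q3, p - q3⟫ : ℝ)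
        = ⟪q3 - q2, q3 - p⟫ + γ * ⟪vu, q3 - p⟫ := by
      rw [show q2 - γ • vu - q3 = -((q3 - q2) + γ • vu) from by module,
        show p - q3 = -(q3 - p) from by module, inner_neg_neg, inner_add_left,
        real_inner_smul_left]
    linarith [hA, e.ge]
  have F3 : γ * ⟪vw, q2 - q3⟫ ≤ ⟪q2 - q1, q3 - q2⟫ := by
    have e : (⟪q1 - γ • vw - q2, q3 - q2⟫ : ℝ)
        = -(⟪q2 - q1, q3 - q2⟫ + γ * ⟪vw, q3 - q2⟫) := by
      rw [show q1 - γ • vw - q2 = -((q2 - q1) + γ • vw) from by module,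
        inner_neg_left, inner_add_left, real_inner_smul_left]
    have e2 : (⟪vw, q2 - q3⟫ : ℝ) = -⟪vw, q3 - q2⟫ := by
      rw [show q2 - q3 = -(q3 - q2) from by module, inner_neg_right]
    have e2' : γ * ⟪vw, q2 - q3⟫ = -(γ * ⟪vw, q3 - q2⟫) := by rw [e2]; ring
    linarith [hB1, e.le, e.ge, e2'.le, e2'.ge]
  have F4 : γ * ⟪vw, q2 - q1⟫ ≤ -A ^ 2 := by
    have e : (⟪q1 - γ • vw - q2, q1 - q2⟫ : ℝ)
        = ⟪q2 - q1, q2 - q1⟫ + γ * ⟪vw, q2 - q1⟫ := by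
      rw [show q1 - γ • vw - q2 = -((q2 - q1) + γ • vw) from by module,
        show q1 - q2 = -(q2 - q1) from by module, inner_neg_neg, inner_add_left,
        real_inner_smul_left]
    have e2 : (⟪q2 - q1, q2 - q1⟫ : ℝ) = A ^ 2 := by
      rw [hA']; exact real_inner_self_eq_norm_sq _
    linarith [hB2, e.ge, e2.le, e2.ge]
  -- decomposition of the product in the goal
  have F5 : (⟪vu, u - p⟫ : ℝ)
      = ⟪vu - vw, u - q3⟫ + ⟪vw, q2 - q3⟫ + ⟪vw, q2 - q1⟫ + ⟪vu, q3 - p⟫ := by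
    have e1 : (⟪vu, u - p⟫ : ℝ) = ⟪vu, u - q3⟫ + ⟪vu, q3 - p⟫ := by
      rw [← inner_add_right]; congr 1; module
    have e2 : (⟪vu - vw, u - q3⟫ : ℝ) = ⟪vu, u - q3⟫ - ⟪vw, u - q3⟫ :=
      inner_sub_left _ _ _
    have e3 : (⟪vw, u - q3⟫ : ℝ) = ⟪vw, q2 - q3⟫ + ⟪vw, q2 - q1⟫ := by
      rw [← inner_add_right]; congr 1; rw [hu2]; module
    linarith
  -- norm identities
  have F1 : ‖q3 - p‖ ^ 2 = ‖q2 - p‖ ^ 2 + 2 * ⟪q3 - q2, q3 - p⟫ - ‖q3 - q2‖ ^ 2 := by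
    have e1 : ‖q3 - p‖ ^ 2 = ‖q3 - q2‖ ^ 2 + 2 * ⟪q3 - q2, q2 - p⟫ + ‖q2 - p‖ ^ 2 := by
      rw [show q3 - p = (q3 - q2) + (q2 - p) from by module, norm_add_sq_real]
    have e2 : (⟪q3 - q2, q3 - p⟫ : ℝ) = ⟪q3 - q2, q3 - q2⟫ + ⟪q3 - q2, q2 - p⟫ := by
      rw [← inner_add_right]; congr 1; module
    have e3 : (⟪q3 - q2, q3 - q2⟫ : ℝ) = ‖q3 - q2‖ ^ 2 := real_inner_self_eq_norm_sq _
    linarith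
  have F6 : E ^ 2 = ‖q3 - q2‖ ^ 2 - 2 * ⟪q2 - q1, q3 - q2⟫ + A ^ 2 := by
    have e1 : ‖q3 - u‖ ^ 2 = ‖q3 - q2‖ ^ 2 - 2 * ⟪q3 - q2, q2 - q1⟫ + ‖q2 - q1‖ ^ 2 := by
      rw [show q3 - u = (q3 - q2) - (q2 - q1) from by rw [hu2]; module, norm_sub_sq_real]
    have e2 : (⟪q3 - q2, q2 - q1⟫ : ℝ) = ⟪q2 - q1, q3 - q2⟫ := real_inner_comm _ _
    rw [hE', hA']
    linarith
  -- scaled Cauchy–Schwarz term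
  have hCS2 : 2 * γ * ⟪vu - vw, u - q3⟫ ≤ 2 * γ * (L * (A + C) * E) :=
    mul_le_mul_of_nonneg_left hCS (by positivity)
  -- final scalar inequality (Young's inequalities)
  have hsc : 2 * γ * (L * (A + C) * E) ≤ E ^ 2 + A ^ 2 + γ * L * C ^ 2 - γ * L * E ^ 2 := by
    have hs2 : Real.sqrt 2 ^ 2 = 2 := Real.sq_sqrt (by norm_num)
    have hknn : 0 ≤ γ * L := by positivity
    nlinarith [sq_nonneg (A - γ * L * E), mul_nonneg hknn (sq_nonneg (C - E)),
      mul_nonneg (mul_nonneg (sub_nonneg.2 hk)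
        (by nlinarith [Real.sqrt_nonneg 2] : (0:ℝ) ≤ Real.sqrt 2 + 1 + γ * L))
        (sq_nonneg E), Real.sqrt_nonneg 2]
  have F5' : γ * ⟪vu, u - p⟫ = γ * ⟪vu - vw, u - q3⟫ + γ * ⟪vw, q2 - q3⟫
      + γ * ⟪vw, q2 - q1⟫ + γ * ⟪vu, q3 - p⟫ := by rw [F5]; ring
  linarith [F1, F2, F3, F4, F5'.le, F5'.ge, F6, hCS2, hsc]
end
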